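/- If there exists a separator for an instance of Dyck-2 reachability, then the instance is a no-instance, i.e., there is no valid walk from s to t. -/

import Mathlib

/-- The four-letter alphabet of Dyck-2: two kinds of opening and closing brackets. -/
inductive Sig2 : Type
  | o1 | c1 | o2 | c2
deriving DecidableEq

/-- The Dyck-2 language: the smallest language containing ε and closed under
concatenation and wrapping in either kind of matching brackets. -/
inductive IsDyck : List Sig2 → Prop
  | nil : IsDyck []
  | append {u v : List Sig2} : IsDyck u → IsDyck v → IsDyck (u ++ v)
  | br1 {u : List Sig2} : IsDyck u → IsDyck (Sig2.o1 :: u ++ [Sig2.c1])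
  | br2 {u : List Sig2} : IsDyck u → IsDyck (Sig2.o2 :: u ++ [Sig2.c2])

/-- `IsWalk E u v p` : `p` is a walk from `u` to `v` in the graph with edge set `E`. -/
def IsWalk {V : Type} (E : Set (V × V)) : V → V → List (V × V) → Prop
  | u, v, [] => u = v
  | u, v, e :: p => e ∈ E ∧ e.1 = u ∧ IsWalk E e.2 v p

/-- A walk is valid if its labels form a Dyck-2 word. -/
def IsValidWalk {V : Type} (E : Set (V × V)) (lab : V × V → Sig2) (u v : V)
    (p : List (V × V)) : Prop :=
  IsWalk E u v p ∧ IsDyck (p.map lab)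


/-- The adjacency matrix of the edges labeled `σ`:
entry `(u, v)` is `1` iff `(u,v) ∈ E` and `lab (u,v) = σ`. -/
def adjMat {n : ℕ} (E : Finset (Fin n × Fin n)) (lab : Fin n × Fin n → Sig2)
    (σ : Sig2) : Matrix (Fin n) (Fin n) ℕ :=
  fun u v => if (u, v) ∈ E ∧ lab (u, v) = σ then 1 else 0

/-- `boolM M` replaces every nonzero entry of `M` by `1`. -/
def boolM {m : ℕ} (M : Matrix (Fin m) (Fin m) ℕ) : Matrix (Fin m) (Fin m) ℕ :=
  fun i j => if M i j = 0 then 0 else 1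

/-- Entrywise order on matrices. -/
def MatLE {m : ℕ} (A B : Matrix (Fin m) (Fin m) ℕ) : Prop :=
  ∀ i j, A i j ≤ B i j

/-- A separator for an instance of Dyck-2 reachability: a sextuple of `n × n`
matrices with entries in `{0, 1, …, n²}`, with `M_S` a `0–1` matrix, satisfying
the ten constraints of Eq. (2). -/
structure Separator {n : ℕ} (E : Finset (Fin n × Fin n))
    (lab : Fin n × Fin n → Sig2) (s t : Fin n) where
  MS : Matrix (Fin n) (Fin n) ℕ
  MSS : Matrix (Fin n) (Fin n) ℕ
  M1oS : Matrix (Fin n) (Fin n) ℕ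
  M2oS : Matrix (Fin n) (Fin n) ℕ
  M1 : Matrix (Fin n) (Fin n) ℕ
  M2 : Matrix (Fin n) (Fin n) ℕ
  entries_bounded : ∀ i j, MS i j ≤ n ^ 2 ∧ MSS i j ≤ n ^ 2 ∧ M1oS i j ≤ n ^ 2 ∧
    M2oS i j ≤ n ^ 2 ∧ M1 i j ≤ n ^ 2 ∧ M2 i j ≤ n ^ 2
  MS_bool : ∀ i j, MS i j ≤ 1
  id_le : MatLE 1 MS
  eq_M1oS : adjMat E lab Sig2.o1 * MS = M1oS
  eq_M2oS : adjMat E lab Sig2.o2 * MS = M2oS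
  eq_MSS : MS * MS = MSS
  eq_M1 : M1oS * adjMat E lab Sig2.c1 = M1
  eq_M2 : M2oS * adjMat E lab Sig2.c2 = M2
  bool_MSS : MatLE (boolM MSS) MS
  bool_M1 : MatLE (boolM M1) MS
  bool_M2 : MatLE (boolM M2) MS
  MS_st : MS s t = 0

lemma isWalk_append {V : Type} (E : Set (V × V)) (p q : List (V × V)) (u v : V) :
    IsWalk E u v (p ++ q) ↔ ∃ w, IsWalk E u w p ∧ IsWalk E w v q := by
  induction p generalizing u with
  | nil =>
    simp only [List.nil_append, IsWalk]
    constructor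
    · intro h; exact ⟨u, rfl, h⟩
    · rintro ⟨w, rfl, h⟩; exact h
  | cons e p ih =>
    constructor
    · rintro ⟨h1, h2, h3⟩
      obtain ⟨w, h4, h5⟩ := (ih e.2).mp h3
      exact ⟨w, ⟨h1, h2, h4⟩, h5⟩
    · rintro ⟨w, ⟨h1, h2, h4⟩, h5⟩
      exact ⟨h1, h2, (ih e.2).mpr ⟨w, h4, h5⟩⟩

lemma one_le_mul_apply {m : ℕ} (A B : Matrix (Fin m) (Fin m) ℕ) (i k j : Fin m)
    (hA : 1 ≤ A i k) (hB : 1 ≤ B k j) : 1 ≤ (A * B) i j := by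
  have : 1 ≤ A i k * B k j := Nat.one_le_iff_ne_zero.mpr (by positivity)
  calc 1 ≤ A i k * B k j := this
    _ ≤ ∑ x, A i x * B x j :=
        Finset.single_le_sum (f := fun x => A i x * B x j)
          (fun x _ => Nat.zero_le _) (Finset.mem_univ k)

lemma key_lemma {n : ℕ} (E : Finset (Fin n × Fin n)) (lab : Fin n × Fin n → Sig2)
    (s t : Fin n) (S : Separator E lab s t) :
    ∀ w, IsDyck w → ∀ p (u v : Fin n), p.map lab = w → IsWalk (↑E) u v p →
      1 ≤ S.MS u v := by
  intro w hw
  induction hw with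
  | nil =>
    intro p u v hmap hwalk
    rw [List.map_eq_nil_iff] at hmap
    subst hmap
    have huv : u = v := hwalk
    subst huv
    have := S.id_le u u
    rwa [Matrix.one_apply_eq] at this
  | append hu hv ihu ihv =>
    intro p u v hmap hwalk
    rcases List.map_eq_append_iff.mp hmap with ⟨p1, p2, rfl, h1, h2⟩
    rcases (isWalk_append _ p1 p2 u v).mp hwalk with ⟨w, hw1, hw2⟩
    have m1 := ihu p1 u w h1 hw1
    have m2 := ihv p2 w v h2 hw2
    have hss : 1 ≤ S.MSS u v := by
      rw [← S.eq_MSS]; exact one_le_mul_apply _ _ u w v m1 m2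
    have := S.bool_MSS u v
    simp only [boolM, if_neg (Nat.one_le_iff_ne_zero.mp hss)] at this
    exact this
  | @br1 w hu ih =>
    intro p u v hmap hwalk
    rcases List.map_eq_cons_iff.mp hmap with ⟨e, q, rfl, he, hq⟩
    rcases List.map_eq_append_iff.mp hq with ⟨q1, q2, rfl, hq1, hq2⟩
    rcases List.map_eq_cons_iff.mp hq2 with ⟨f, r, rfl, hf, hr⟩
    rw [List.map_eq_nil_iff] at hr; subst hr
    obtain ⟨heE, heu, hwalk'⟩ := hwalk
    rcases (isWalk_append _ q1 [f] e.2 v).mp hwalk' with ⟨w', hwq, hwf⟩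
    obtain ⟨hfE, hfw, hfv⟩ := hwf
    have hfv : f.2 = v := hfv
    have mmid : 1 ≤ S.MS e.2 f.1 := by
      rw [hfw]; exact ih q1 e.2 w' hq1 hwq
    have hAo : 1 ≤ adjMat E lab Sig2.o1 u e.2 := by
      simp only [adjMat]
      rw [if_pos ⟨by rw [← heu]; simpa using heE, by rw [← heu]; simpa using he⟩]
    have hAc : 1 ≤ adjMat E lab Sig2.c1 f.1 v := by
      simp only [adjMat]
      rw [if_pos ⟨by rw [← hfv]; simpa using hfE, by rw [← hfv]; simpa using hf⟩]
    have hM1 : 1 ≤ S.M1 u v := by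
      rw [← S.eq_M1, ← S.eq_M1oS]
      exact one_le_mul_apply _ _ u f.1 v
        (one_le_mul_apply _ _ u e.2 f.1 hAo mmid) hAc
    have := S.bool_M1 u v
    simp only [boolM, if_neg (Nat.one_le_iff_ne_zero.mp hM1)] at this
    exact this
  | @br2 w hu ih =>
    intro p u v hmap hwalk
    rcases List.map_eq_cons_iff.mp hmap with ⟨e, q, rfl, he, hq⟩
    rcases List.map_eq_append_iff.mp hq with ⟨q1, q2, rfl, hq1, hq2⟩
    rcases List.map_eq_cons_iff.mp hq2 with ⟨f, r, rfl, hf, hr⟩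
    rw [List.map_eq_nil_iff] at hr; subst hr
    obtain ⟨heE, heu, hwalk'⟩ := hwalk
    rcases (isWalk_append _ q1 [f] e.2 v).mp hwalk' with ⟨w', hwq, hwf⟩
    obtain ⟨hfE, hfw, hfv⟩ := hwf
    have hfv : f.2 = v := hfv
    have mmid : 1 ≤ S.MS e.2 f.1 := by
      rw [hfw]; exact ih q1 e.2 w' hq1 hwq
    have hAo : 1 ≤ adjMat E lab Sig2.o2 u e.2 := by
      simp only [adjMat]
      rw [if_pos ⟨by rw [← heu]; simpa using heE, by rw [← heu]; simpa using he⟩]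
    have hAc : 1 ≤ adjMat E lab Sig2.c2 f.1 v := by
      simp only [adjMat]
      rw [if_pos ⟨by rw [← hfv]; simpa using hfE, by rw [← hfv]; simpa using hf⟩]
    have hM2 : 1 ≤ S.M2 u v := by
      rw [← S.eq_M2, ← S.eq_M2oS]
      exact one_le_mul_apply _ _ u f.1 v
        (one_le_mul_apply _ _ u e.2 f.1 hAo mmid) hAc
    have := S.bool_M2 u v
    simp only [boolM, if_neg (Nat.one_le_iff_ne_zero.mp hM2)] at this
    exact this

/-- If there exists a separator for an instance of Dyck-2 reachability, then the
instance is a no-instance: there is no valid walk from `s` to `t`. -/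
theorem no_validWalk_of_separator
    {n : ℕ} (E : Finset (Fin n × Fin n)) (lab : Fin n × Fin n → Sig2)
    (s t : Fin n) (S : Separator E lab s t) :
    ¬ ∃ p : List (Fin n × Fin n), IsValidWalk (↑E) lab s t p := by
  rintro ⟨p, hwalk, hdyck⟩
  have := key_lemma E lab s t S _ hdyck p s t rfl hwalk
  rw [S.MS_st] at this
  exact Nat.not_succ_le_zero 0 this
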